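/- Let a, b ∈ [0,1] and let ρ = (1/4)(I₄ − a·(σ₁⊗σ₁ + σ₂⊗σ₂) − b·σ₃⊗σ₃). Then ρ is Hermitian, its eigenvalues are (1 + 2a + b)/4, (1 − b)/4 (with multiplicity two), and (1 − 2a + b)/4, and its largest eigenvalue is τ = (1 + 2a + b)/4. In particular, for a = 2^{1−i}·∏_{k=1}^{i−1}(1+√(1−λ_k²))/2 and b = ∏_{k=1}^{i−1}√(1−λ_k²) with λ_k ∈ [0,1], the largest eigenvalue of the shared state before the i-th measurement is τ^i = (1/4)[1 + ∏_{k=1}^{i−1}√(1−λ_k²) + 2^{2−i}·∏_{k=1}^{i−1}(1+√(1−λ_k²))]. -/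

import Mathlib

/-!
In the computational basis `|00⟩, |01⟩, |10⟩, |11⟩` the operators `σ₁⊗σ₁ + σ₂⊗σ₂` and `σ₃⊗σ₃`
act as `2(|01⟩⟨10| + |10⟩⟨01|)` and `diag(1, -1, -1, 1)`, so `ρ` is block diagonal: the
`|01⟩, |10⟩` block is `[[p, q], [q, p]]` with `p = (1 + b)/4`, `q = -a/2`, whose eigenvalues are
`p ± q`, and `|00⟩, |11⟩` both carry `(1 - b)/4`. Everything else is arithmetic.
-/

open Matrix
open Kronecker
open Polynomial

noncomputable section

/-- The first Pauli matrix. -/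
def sigma1 : Matrix (Fin 2) (Fin 2) ℂ := !![0, 1; 1, 0]

/-- The second Pauli matrix. -/
def sigma2 : Matrix (Fin 2) (Fin 2) ℂ := !![0, -Complex.I; Complex.I, 0]

/-- The third Pauli matrix. -/
def sigma3 : Matrix (Fin 2) (Fin 2) ℂ := !![1, 0; 0, -1]

/-- The Bell-diagonal state ρ = (1/4)(I₄ − a (σ₁⊗σ₁ + σ₂⊗σ₂) − b σ₃⊗σ₃). -/
def bdState (a b : ℝ) : Matrix (Fin 2 × Fin 2) (Fin 2 × Fin 2) ℂ :=
  ((1/4 : ℝ) : ℂ) • ((1 : Matrix (Fin 2 × Fin 2) (Fin 2 × Fin 2) ℂ)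
    - (a : ℂ) • (sigma1 ⊗ₖ sigma1 + sigma2 ⊗ₖ sigma2) - (b : ℂ) • (sigma3 ⊗ₖ sigma3))

theorem Matrix.IsHermitian.kronecker {l n R : Type*} [CommRing R] [StarRing R]
    {A : Matrix l l R} {B : Matrix n n R} (hA : A.IsHermitian) (hB : B.IsHermitian) :
    (A ⊗ₖ B).IsHermitian := by
  rw [IsHermitian, conjTranspose_kronecker, hA.eq, hB.eq]

theorem sigma1_isHermitian : sigma1.IsHermitian := by
  ext i j; fin_cases i <;> fin_cases j <;> simp [sigma1]

theorem sigma2_isHermitian : sigma2.IsHermitian := by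
  ext i j; fin_cases i <;> fin_cases j <;> simp [sigma2]

theorem sigma3_isHermitian : sigma3.IsHermitian := by
  ext i j; fin_cases i <;> fin_cases j <;> simp [sigma3]

theorem bdState_isHermitian (a b : ℝ) : (bdState a b).IsHermitian := by
  have hreal (r : ℝ) : IsSelfAdjoint (r : ℂ) := Complex.conj_ofReal r
  have hXY : (sigma1 ⊗ₖ sigma1 + sigma2 ⊗ₖ sigma2).IsHermitian :=
    (sigma1_isHermitian.kronecker sigma1_isHermitian).add
      (sigma2_isHermitian.kronecker sigma2_isHermitian)
  have hZ : (sigma3 ⊗ₖ sigma3).IsHermitian := sigma3_isHermitian.kronecker sigma3_isHermitian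
  exact ((isHermitian_one.sub (hXY.smul (hreal a))).sub (hZ.smul (hreal b))).smul (hreal _)

theorem Matrix.charpoly_submatrix_equiv {m n R : Type*} [Fintype m] [DecidableEq m]
    [Fintype n] [DecidableEq n] [CommRing R] (M : Matrix m m R) (e : n ≃ m) :
    (M.submatrix e e).charpoly = M.charpoly :=
  charpoly_reindex e.symm M

theorem charpoly_fin_four_block {R : Type*} [CommRing R] (d p q : R) :
    (!![d, 0, 0, 0; 0, p, q, 0; 0, q, p, 0; 0, 0, 0, d] : Matrix (Fin 4) (Fin 4) R).charpoly
      = (X - C (p - q)) * (X - C d) ^ 2 * (X - C (p + q)) := by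
  simp [charpoly, det_succ_row_zero, Fin.sum_univ_succ, charmatrix_apply, Fin.succAbove]
  ring

theorem bdState_eq_submatrix (a b : ℝ) :
    bdState a b = (!![(1 - b) / 4, 0, 0, 0; 0, (1 + b) / 4, -(a / 2), 0;
      0, -(a / 2), (1 + b) / 4, 0; 0, 0, 0, (1 - b) / 4] : Matrix (Fin 4) (Fin 4) ℂ).submatrix
        finProdFinEquiv finProdFinEquiv := by
  ext ⟨i, j⟩ ⟨k, l⟩
  fin_cases i <;> fin_cases j <;> fin_cases k <;> fin_cases l <;>
    simp [bdState, sigma1, sigma2, sigma3, one_apply, finProdFinEquiv] <;>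
    ring

theorem charpoly_bdState (a b : ℝ) :
    (bdState a b).charpoly
      = (X - C (((1 + 2*a + b)/4 : ℝ) : ℂ)) * (X - C (((1 - b)/4 : ℝ) : ℂ))^2
          * (X - C (((1 - 2*a + b)/4 : ℝ) : ℂ)) := by
  rw [bdState_eq_submatrix, charpoly_submatrix_equiv, charpoly_fin_four_block]
  push_cast
  ring_nf

theorem mul_div_pow_eq_zpow_one_sub_mul {K : Type*} [Field K] {x : K} (hx : x ≠ 0) (n : ℕ)
    (y : K) : x * (y / x ^ n) = x ^ (1 - (n : ℤ)) * y := by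
  rw [zpow_sub₀ hx, zpow_one, zpow_natCast]
  ring

theorem bd_state_eigenvalues (a b : ℝ) (ha : a ∈ Set.Icc (0:ℝ) 1)
    (hb : b ∈ Set.Icc (0:ℝ) 1) :
    (bdState a b).IsHermitian ∧
    (bdState a b).charpoly
      = (X - C (((1 + 2*a + b)/4 : ℝ) : ℂ)) * (X - C (((1 - b)/4 : ℝ) : ℂ))^2
          * (X - C (((1 - 2*a + b)/4 : ℝ) : ℂ)) ∧
    (1 - b)/4 ≤ (1 + 2*a + b)/4 ∧ (1 - 2*a + b)/4 ≤ (1 + 2*a + b)/4 ∧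
    (∀ (n : ℕ) (lam : Fin n → ℝ), (∀ k, lam k ∈ Set.Icc (0:ℝ) 1) →
      a = (∏ k, (1 + Real.sqrt (1 - lam k ^ 2))) / 2 ^ n →
      b = ∏ k, Real.sqrt (1 - lam k ^ 2) →
      (1 + 2*a + b)/4
        = (1/4) * (1 + (∏ k, Real.sqrt (1 - lam k ^ 2))
            + (2:ℝ) ^ (1 - (n:ℤ)) * ∏ k, (1 + Real.sqrt (1 - lam k ^ 2)))) := by
  refine ⟨bdState_isHermitian a b, charpoly_bdState a b, by linarith [ha.1, hb.1],
    by linarith [ha.1], ?_⟩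
  rintro n lam - rfl rfl
  rw [← mul_div_pow_eq_zpow_one_sub_mul two_ne_zero]
  ring

end
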